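/- Let A be a finite-dimensional algebra over an algebraically closed field. Then A admits an infinite Hom-orthogonal set of finite-dimensional modules if and only if A admits an infinite Hom-orthogonal set of bricks (an infinite semibrick). -/

import Mathlib

/-!
Every nonzero finite-dimensional module `M` has a brick `B` that is both a quotient and a
submodule of `M`: if `End_A(M) ≠ k`, some endomorphism minus one of its eigenvalues is nonzero and
not injective, and its image is a strictly smaller nonzero module that is again both a quotient and
a submodule of `M`. If `B` is a quotient of `M` and `C` a submodule of `N`, a nonzero map `B → C`
gives a nonzero map `M → N`; so replacing each member of a Hom-orthogonal set by such a brick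
yields a semibrick of the same size.
-/

universe u v

open Module

/-- A finite-dimensional left module over the `k`-algebra `A`. -/
structure FDMod (k A : Type u) [Field k] [Ring A] [Algebra k A] : Type (u + 1) where
  carrier : Type u
  [addCommGroup : AddCommGroup carrier]
  [moduleK : Module k carrier]
  [moduleA : Module A carrier]
  [tower : IsScalarTower k A carrier]
  [fd : FiniteDimensional k carrier]

attribute [instance] FDMod.addCommGroup FDMod.moduleK FDMod.moduleA FDMod.tower FDMod.fd

variable {k A : Type u} [Field k] [Ring A] [Algebra k A]

/-- `M` is a brick: `M ≠ 0` and every `A`-endomorphism of `M` is a `k`-scalar,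
i.e. `End_A(M) ≅ k`. -/
def FDMod.IsBrick (M : FDMod k A) : Prop :=
  Nontrivial M.carrier ∧ ∀ f : M.carrier →ₗ[A] M.carrier, ∃ c : k, ∀ x : M.carrier, f x = c • x

/-- `M` and `N` are Hom-orthogonal: `Hom_A(M,N) = 0` and `Hom_A(N,M) = 0`. -/
def FDMod.HomOrth (M N : FDMod k A) : Prop :=
  (∀ f : M.carrier →ₗ[A] N.carrier, f = 0) ∧ (∀ f : N.carrier →ₗ[A] M.carrier, f = 0)

/-- `M` and `N` are isomorphic as `A`-modules. -/
def FDMod.Iso (M N : FDMod k A) : Prop :=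
  Nonempty (M.carrier ≃ₗ[A] N.carrier)

/-- A family of modules forms a Hom-orthogonal set: the modules are nonzero,
pairwise non-isomorphic and pairwise Hom-orthogonal. -/
def HomOrthFamily {I : Type v} (X : I → FDMod k A) : Prop :=
  (∀ i, Nontrivial (X i).carrier) ∧
  (∀ i j, i ≠ j → ¬(X i).Iso (X j)) ∧
  (∀ i j, i ≠ j → (X i).HomOrth (X j))

/-- `A` is brick-finite: there are only finitely many isomorphism classes of bricks. -/
def BrickFinite (k A : Type u) [Field k] [Ring A] [Algebra k A] : Prop :=
  ∃ (m : ℕ) (f : Fin m → FDMod k A), ∀ N : FDMod k A, N.IsBrick → ∃ i, N.Iso (f i)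

/-- `A` has rank `n`: there are exactly `n` isomorphism classes of simple modules. -/
def HasRank (k A : Type u) [Field k] [Ring A] [Algebra k A] (n : ℕ) : Prop :=
  ∃ S : Fin n → FDMod k A,
    (∀ i, IsSimpleModule A (S i).carrier) ∧
    (∀ i j, i ≠ j → ¬(S i).Iso (S j)) ∧
    (∀ T : FDMod k A, IsSimpleModule A T.carrier → ∃ i, T.Iso (S i))

section

variable {R M N P Q : Type*} [Semiring R] [AddCommMonoid M] [AddCommMonoid N] [AddCommMonoid P]
  [AddCommMonoid Q] [Module R M] [Module R N] [Module R P] [Module R Q]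

theorem LinearMap.eq_zero_of_comp_comp_eq_zero {π : M →ₗ[R] N} {f : N →ₗ[R] P} {ι : P →ₗ[R] Q}
    (hπ : Function.Surjective π) (hι : Function.Injective ι) (h : ι ∘ₗ f ∘ₗ π = 0) : f = 0 := by
  ext n
  obtain ⟨m, rfl⟩ := hπ n
  exact hι (by simpa using LinearMap.congr_fun h m)

end

section

variable {M : Type*} [AddCommGroup M] [Module k M] [Module A M] [IsScalarTower k A M]
  [FiniteDimensional k M]

theorem exists_ne_zero_not_injective_of_not_scalar [IsAlgClosed k] [Nontrivial M] {f : M →ₗ[A] M}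
    (hf : ¬ ∃ c : k, ∀ x, f x = c • x) : ∃ g : M →ₗ[A] M, g ≠ 0 ∧ ¬ Function.Injective g := by
  obtain ⟨c, hc⟩ := Module.End.exists_eigenvalue (f.restrictScalars k)
  obtain ⟨x, hx, hx0⟩ := hc.exists_hasEigenvector
  refine ⟨f - c • LinearMap.id, fun h ↦ hf ⟨c, fun y ↦ ?_⟩, fun hinj ↦ hx0 (hinj ?_)⟩
  · simpa [sub_eq_zero] using LinearMap.congr_fun h y
  · have hfx : f x = c • x := Module.End.mem_eigenspace_iff.mp hx
    simp [hfx]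

theorem Submodule.finrank_lt_of_ne_top {p : Submodule A M} (h : p ≠ ⊤) :
    finrank k p < finrank k M :=
  Submodule.finrank_lt (s := p.restrictScalars k) (by simpa using h)

theorem LinearMap.finrank_range_lt_of_not_injective {g : M →ₗ[A] M}
    (hg : ¬ Function.Injective g) : finrank k (LinearMap.range g) < finrank k M :=
  Submodule.finrank_lt_of_ne_top fun h ↦
    hg ((LinearMap.injective_iff_surjective (f := g.restrictScalars k)).mpr
      (LinearMap.range_eq_top.mp h :))

end

theorem FDMod.exists_brick_surjective_injective [IsAlgClosed k] (M : FDMod k A)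
    (hM : Nontrivial M.carrier) :
    ∃ (B : FDMod k A) (π : M.carrier →ₗ[A] B.carrier) (ι : B.carrier →ₗ[A] M.carrier),
      B.IsBrick ∧ Function.Surjective π ∧ Function.Injective ι := by
  induction hn : finrank k M.carrier using Nat.strong_induction_on generalizing M with
  | _ n ih =>
    by_cases hbrick : ∀ f : M.carrier →ₗ[A] M.carrier, ∃ c : k, ∀ x, f x = c • x
    · exact ⟨M, LinearMap.id, LinearMap.id, ⟨hM, hbrick⟩, Function.surjective_id,
        Function.injective_id⟩
    obtain ⟨f, hf⟩ := not_forall.mp hbrick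
    obtain ⟨g, hg0, hg⟩ := exists_ne_zero_not_injective_of_not_scalar hf
    have : FiniteDimensional k (LinearMap.range g) :=
      .of_injective ((LinearMap.range g).subtype.restrictScalars k) Subtype.val_injective
    let Im : FDMod k A := ⟨LinearMap.range g⟩
    have hIm : Nontrivial Im.carrier :=
      Submodule.nontrivial_iff_ne_bot.mpr (LinearMap.range_eq_bot.not.mpr hg0)
    obtain ⟨B, π, ι, hB, hπ, hι⟩ :=
      ih _ (hn ▸ LinearMap.finrank_range_lt_of_not_injective hg) Im hIm rfl
    exact ⟨B, π ∘ₗ g.rangeRestrict, (LinearMap.range g).subtype ∘ₗ ι, hB,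
      hπ.comp g.surjective_rangeRestrict, Subtype.val_injective.comp hι⟩

theorem FDMod.HomOrth.of_surjective_injective {M N B C : FDMod k A} (h : M.HomOrth N)
    {πM : M.carrier →ₗ[A] B.carrier} {ιM : B.carrier →ₗ[A] M.carrier}
    {πN : N.carrier →ₗ[A] C.carrier} {ιN : C.carrier →ₗ[A] N.carrier}
    (hπM : Function.Surjective πM) (hιM : Function.Injective ιM)
    (hπN : Function.Surjective πN) (hιN : Function.Injective ιN) : B.HomOrth C :=
  ⟨fun _ ↦ LinearMap.eq_zero_of_comp_comp_eq_zero hπM hιN (h.1 _),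
    fun _ ↦ LinearMap.eq_zero_of_comp_comp_eq_zero hπN hιM (h.2 _)⟩

theorem FDMod.HomOrth.not_iso {M N : FDMod k A} [Nontrivial M.carrier] (h : M.HomOrth N) :
    ¬ M.Iso N := by
  rintro ⟨e⟩
  obtain ⟨x, hx⟩ := exists_ne (0 : M.carrier)
  exact hx (e.injective (by simpa using LinearMap.congr_fun (h.1 e.toLinearMap) x))

theorem stmt6_general {k A : Type u} [Field k] [IsAlgClosed k] [Ring A] [Algebra k A] :
    (∃ (I : Type u) (X : I → FDMod k A), Infinite I ∧ HomOrthFamily X) ↔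
    (∃ (I : Type u) (X : I → FDMod k A), Infinite I ∧ HomOrthFamily X ∧
      ∀ i, (X i).IsBrick) := by
  refine ⟨fun ⟨I, X, hI, hX, _, horth⟩ ↦ ?_, fun ⟨I, X, hI, hX, _⟩ ↦ ⟨I, X, hI, hX⟩⟩
  choose B π ι hB hπ hι using fun i ↦ (X i).exists_brick_surjective_injective (hX i)
  have horthB : ∀ i j, i ≠ j → (B i).HomOrth (B j) := fun i j hij ↦
    (horth i j hij).of_surjective_injective (hπ i) (hι i) (hπ j) (hι j)
  refine ⟨I, B, hI, ⟨fun i ↦ (hB i).1, fun i j hij ↦ ?_, horthB⟩, hB⟩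
  have := (hB i).1
  exact (horthB i j hij).not_iso

/-- `A` admits an infinite Hom-orthogonal set of finite-dimensional
modules if and only if `A` admits an infinite Hom-orthogonal set of bricks (an
infinite semibrick). -/
theorem stmt6 {k A : Type u} [Field k] [IsAlgClosed k] [Ring A] [Algebra k A]
    [FiniteDimensional k A] :
    (∃ (I : Type u) (X : I → FDMod k A), Infinite I ∧ HomOrthFamily X) ↔
    (∃ (I : Type u) (X : I → FDMod k A), Infinite I ∧ HomOrthFamily X ∧
      ∀ i, (X i).IsBrick) :=
  stmt6_general
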